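/- arXiv:2602.04857 — 2 statements merged into one kernel-verified Lean document; each statement's English description precedes it below -/
import Mathlib

section
/- Let X⁺(x1,x2,x3) = (a₁x1 + a₂x3 + a₁(a₁+a₃), a₄x3, a₅x3 − 1) and X⁻(x1,x2,x3) = (μ + a₃x1 + a₆x3 − a₁(a₁+a₃), −x2 + a₇x3, −(1/a₁)x1 + a₈x3 + 1) with a₁ ≠ 0, and h(x) = x3. Then the sliding vector field on M = {x3 = 0}, i.e. the first two components of (X⁻h)X⁺ − (X⁺h)X⁻ at x3 = 0, equals Xˢ(x1,x2) = (μ − x1², −x2). -/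
/-- For the explicit PSVF of the saddle-node example, the planar sliding vector field
on `M = {x₃ = 0}` (first two components of `(X⁻h)X⁺ − (X⁺h)X⁻` at `x₃ = 0`)
equals `(μ − x₁², −x₂)`. -/
theorem sliding_saddle_node_example (a1 a2 a3 a4 a5 a6 a7 a8 μ : ℝ) (ha1 : a1 ≠ 0) :
    ∀ x1 x2 : ℝ,
      let Xp : ℝ × ℝ × ℝ → ℝ × ℝ × ℝ := fun p =>
        (a1 * p.1 + a2 * p.2.2 + a1 * (a1 + a3), a4 * p.2.2, a5 * p.2.2 - 1)
      let Xm : ℝ × ℝ × ℝ → ℝ × ℝ × ℝ := fun p =>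
        (μ + a3 * p.1 + a6 * p.2.2 - a1 * (a1 + a3), -p.2.1 + a7 * p.2.2,
          -(1 / a1) * p.1 + a8 * p.2.2 + 1)
      ((Xm (x1, x2, 0)).2.2 * (Xp (x1, x2, 0)).1 - (Xp (x1, x2, 0)).2.2 * (Xm (x1, x2, 0)).1,
        (Xm (x1, x2, 0)).2.2 * (Xp (x1, x2, 0)).2.1 -
          (Xp (x1, x2, 0)).2.2 * (Xm (x1, x2, 0)).2.1) = (μ - x1 ^ 2, -x2) := by
  intro x1 x2 Xp Xm
  simp only [Xp, Xm, Prod.mk.injEq]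
  constructor
  · linear_combination -x1 * (x1 + a1 + a3) * one_div_mul_cancel ha1
  · ring
end

section
/- Let γ(λ) = X_λ = (X₀⁺ + λ·(0,0,x2), X₀⁻) be the unfolding curve used for the lips/beak-to-beak case, and let η be defined by η(X) = det[Dh(0), D(X⁺h)(0), D((X⁺)²h)(0)] with h(x) = x3. Suppose X₀⁺ satisfies at 0: X₁⁺ ≠ 0, X₂⁺ = X₃⁺ = 0, ∂X₃⁺/∂x1 = ∂X₃⁺/∂x2 = 0, ∂²X₃⁺/∂x1∂x2 = ∂²X₃⁺/∂x2∂x3 = 0, and ∂²X₃⁺/∂x1² ≠ 0. Then d/dλ η(γ(λ))|_{λ=0} = −X₁⁺(0)·∂²X₃⁺/∂x1²(0) ≠ 0. -/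
open Matrix

/-- Surjectivity computation for the lips/beak-to-beak submersion: along the unfolding
curve `γ(λ) = (X₀⁺ + λ·(0,0,x₂), X₀⁻)`, the function
`η(λ) = det[Dh(0), D(X_λ⁺h)(0), D((X_λ⁺)²h)(0)]` (with `h = x₃`) satisfies
`η'(0) = −X₁⁺(0)·∂²X₃⁺/∂x₁²(0) ≠ 0`, under the stated quasi-generic conditions. -/
theorem lips_beak_submersion_derivative
    (X1 X2 X3 : ℝ × ℝ × ℝ → ℝ)
    (h1 : ContDiff ℝ (⊤ : ℕ∞) X1) (h2 : ContDiff ℝ (⊤ : ℕ∞) X2) (h3 : ContDiff ℝ (⊤ : ℕ∞) X3) :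
    -- partial derivative operators in the three coordinate directions
    let d1 : (ℝ × ℝ × ℝ → ℝ) → ℝ × ℝ × ℝ → ℝ := fun f p =>
      fderiv ℝ f p ((1 : ℝ), (0 : ℝ), (0 : ℝ))
    let d2 : (ℝ × ℝ × ℝ → ℝ) → ℝ × ℝ × ℝ → ℝ := fun f p =>
      fderiv ℝ f p ((0 : ℝ), (1 : ℝ), (0 : ℝ))
    let d3 : (ℝ × ℝ × ℝ → ℝ) → ℝ × ℝ × ℝ → ℝ := fun f p =>
      fderiv ℝ f p ((0 : ℝ), (0 : ℝ), (1 : ℝ))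
    -- third component of the perturbed field X_λ⁺ = X₀⁺ + λ·(0,0,x₂)
    let X3l : ℝ → ℝ × ℝ × ℝ → ℝ := fun lam p => X3 p + lam * p.2.1
    -- (X_λ⁺)²h = ⟨X_λ⁺, ∇(X_λ⁺h)⟩
    let W : ℝ → ℝ × ℝ × ℝ → ℝ := fun lam p =>
      X1 p * d1 (X3l lam) p + X2 p * d2 (X3l lam) p + X3l lam p * d3 (X3l lam) p
    let η : ℝ → ℝ := fun lam =>
      (!![(0 : ℝ), 0, 1;
          d1 (X3l lam) 0, d2 (X3l lam) 0, d3 (X3l lam) 0;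
          d1 (W lam) 0, d2 (W lam) 0, d3 (W lam) 0] : Matrix (Fin 3) (Fin 3) ℝ).det
    X1 0 ≠ 0 → X2 0 = 0 → X3 0 = 0 →
    d1 X3 0 = 0 → d2 X3 0 = 0 →
    d2 (fun p => d1 X3 p) 0 = 0 → d3 (fun p => d2 X3 p) 0 = 0 →
    d1 (fun p => d1 X3 p) 0 ≠ 0 →
    HasDerivAt η (-(X1 0) * d1 (fun p => d1 X3 p) 0) 0 ∧
      -(X1 0) * d1 (fun p => d1 X3 p) 0 ≠ 0 := by 
  intro d1 d2 d3 X3l W η hX1 hX2 hX3 hd1 hd2 hd12 hd32 ha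
  have hX1d : Differentiable ℝ X1 := h1.differentiable (by simp)
  have hX2d : Differentiable ℝ X2 := h2.differentiable (by simp)
  have hX3d : Differentiable ℝ X3 := h3.differentiable (by simp)
  -- derivative of the perturbed third component
  have hX3l : ∀ (lam : ℝ) (p v : ℝ × ℝ × ℝ),
      fderiv ℝ (fun p : ℝ × ℝ × ℝ => X3 p + lam * p.2.1) p v = fderiv ℝ X3 p v + lam * v.2.1 := by
    intro lam p v
    have hL : HasFDerivAt (fun p : ℝ × ℝ × ℝ => lam * p.2.1)
        (lam • ((ContinuousLinearMap.fst ℝ ℝ ℝ).comp (ContinuousLinearMap.snd ℝ ℝ (ℝ × ℝ)))) p := by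
      have := (((ContinuousLinearMap.fst ℝ ℝ ℝ).comp
        (ContinuousLinearMap.snd ℝ ℝ (ℝ × ℝ))).hasFDerivAt (x := p)).const_mul lam
      simpa using this
    have h : HasFDerivAt (fun p : ℝ × ℝ × ℝ => X3 p + lam * p.2.1)
        (fderiv ℝ X3 p + lam • ((ContinuousLinearMap.fst ℝ ℝ ℝ).comp (ContinuousLinearMap.snd ℝ ℝ (ℝ × ℝ)))) p :=
      ((hX3d p).hasFDerivAt.add hL)
    rw [h.fderiv]; simp
  have hsnd : Differentiable ℝ (fun p : ℝ × ℝ × ℝ => p.2.1) :=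
    differentiable_fst.comp differentiable_snd
  have hg : ∀ v : ℝ × ℝ × ℝ, Differentiable ℝ (fun p => fderiv ℝ X3 p v) :=
    fun v => ((h3.fderiv_right (m := (⊤ : ℕ∞)) (by simp)).clm_apply contDiff_const).differentiable (by simp)
  set A : ℝ := fderiv ℝ (fun p => fderiv ℝ X3 p ((1:ℝ),(0:ℝ),(0:ℝ))) 0 ((1:ℝ),(0:ℝ),(0:ℝ)) with hA
  set B : ℝ := fderiv ℝ X2 0 ((1:ℝ),(0:ℝ),(0:ℝ)) with hB
  -- rewrite W
  have hWeq : ∀ lam : ℝ, W lam = fun p => X1 p * fderiv ℝ X3 p ((1:ℝ),(0:ℝ),(0:ℝ))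
      + X2 p * (fderiv ℝ X3 p ((0:ℝ),(1:ℝ),(0:ℝ)) + lam)
      + (X3 p + lam * p.2.1) * fderiv ℝ X3 p ((0:ℝ),(0:ℝ),(1:ℝ)) := by
    intro lam; funext p
    show X1 p * fderiv ℝ (fun p : ℝ×ℝ×ℝ => X3 p + lam * p.2.1) p ((1:ℝ),(0:ℝ),(0:ℝ))
      + X2 p * fderiv ℝ (fun p : ℝ×ℝ×ℝ => X3 p + lam * p.2.1) p ((0:ℝ),(1:ℝ),(0:ℝ))
      + (X3 p + lam * p.2.1) * fderiv ℝ (fun p : ℝ×ℝ×ℝ => X3 p + lam * p.2.1) p ((0:ℝ),(0:ℝ),(1:ℝ)) = _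
    rw [hX3l, hX3l, hX3l]
    norm_num
  -- first derivative of W at 0
  have hdW1 : ∀ lam : ℝ, d1 (W lam) 0 = X1 0 * A + lam * B := by
    intro lam
    show fderiv ℝ (W lam) 0 ((1:ℝ),(0:ℝ),(0:ℝ)) = _
    rw [hWeq]
    have D1 : DifferentiableAt ℝ (fun p => X1 p * fderiv ℝ X3 p ((1:ℝ),(0:ℝ),(0:ℝ))) 0 :=
      (hX1d 0).mul (hg _ 0)
    have D2 : DifferentiableAt ℝ (fun p => X2 p * (fderiv ℝ X3 p ((0:ℝ),(1:ℝ),(0:ℝ)) + lam)) 0 :=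
      (hX2d 0).mul ((hg _ 0).add_const lam)
    have D3' : DifferentiableAt ℝ (fun p : ℝ×ℝ×ℝ => X3 p + lam * p.2.1) 0 :=
      (hX3d 0).add ((hsnd 0).const_mul lam)
    have D3 : DifferentiableAt ℝ
        (fun p : ℝ×ℝ×ℝ => (X3 p + lam * p.2.1) * fderiv ℝ X3 p ((0:ℝ),(0:ℝ),(1:ℝ))) 0 :=
      D3'.mul (hg _ 0)
    rw [fderiv_fun_add (show DifferentiableAt ℝ (fun p : ℝ×ℝ×ℝ => X1 p * fderiv ℝ X3 p ((1:ℝ),(0:ℝ),(0:ℝ)) + X2 p * (fderiv ℝ X3 p ((0:ℝ),(1:ℝ),(0:ℝ)) + lam)) 0 from D1.add D2) D3, fderiv_fun_add D1 D2,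
        fderiv_fun_mul (hX1d 0) (hg _ 0), fderiv_fun_mul (hX2d 0) ((hg _ 0).add_const lam),
        fderiv_fun_mul D3' (hg _ 0), fderiv_add_const]
    have hz1 : fderiv ℝ X3 0 ((1:ℝ),(0:ℝ),(0:ℝ)) = 0 := hd1
    have hz2 : fderiv ℝ X3 0 ((0:ℝ),(1:ℝ),(0:ℝ)) = 0 := hd2
    have hz3 : fderiv ℝ (fun p : ℝ×ℝ×ℝ => X3 p + lam * p.2.1) 0 ((1:ℝ),(0:ℝ),(0:ℝ)) = 0 := by
      rw [hX3l]; simpa using hz1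
    simp only [ContinuousLinearMap.add_apply, ContinuousLinearMap.smul_apply, smul_eq_mul]
    rw [hz1, hz2, hz3, hX2, hX3, hA, hB,
      show ((0:ℝ×ℝ×ℝ).2.1 = (0:ℝ)) from rfl]
    ring
  -- entries of the second row
  have hr1 : ∀ lam : ℝ, d1 (X3l lam) 0 = 0 := by
    intro lam
    show fderiv ℝ (fun p : ℝ×ℝ×ℝ => X3 p + lam * p.2.1) 0 ((1:ℝ),(0:ℝ),(0:ℝ)) = 0
    rw [hX3l]
    have hz1 : fderiv ℝ X3 0 ((1:ℝ),(0:ℝ),(0:ℝ)) = 0 := hd1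
    simpa using hz1
  have hr2 : ∀ lam : ℝ, d2 (X3l lam) 0 = lam := by
    intro lam
    show fderiv ℝ (fun p : ℝ×ℝ×ℝ => X3 p + lam * p.2.1) 0 ((0:ℝ),(1:ℝ),(0:ℝ)) = lam
    rw [hX3l]
    have hz2 : fderiv ℝ X3 0 ((0:ℝ),(1:ℝ),(0:ℝ)) = 0 := hd2
    simp [hz2]
  -- the determinant
  have hη : ∀ lam : ℝ, η lam = -(lam * (X1 0 * A + lam * B)) := by
    intro lam
    show (!![(0 : ℝ), 0, 1;
          d1 (X3l lam) 0, d2 (X3l lam) 0, d3 (X3l lam) 0;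
          d1 (W lam) 0, d2 (W lam) 0, d3 (W lam) 0] : Matrix (Fin 3) (Fin 3) ℝ).det = _
    rw [Matrix.det_fin_three]
    simp [hr1, hr2, hdW1]
  constructor
  · have hpoly : HasDerivAt (fun lam : ℝ => -(lam * (X1 0 * A + lam * B))) (-(X1 0 * A)) 0 := by
      have h := ((hasDerivAt_id (0:ℝ)).mul
        (((hasDerivAt_id (0:ℝ)).mul_const B).const_add (X1 0 * A))).neg
      simpa [Pi.neg_def, Pi.mul_def] using h
    have hfun : η = fun lam : ℝ => -(lam * (X1 0 * A + lam * B)) := funext hη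
    rw [hfun]
    have : -(X1 0) * d1 (fun p => d1 X3 p) 0 = -(X1 0 * A) := by
      show -(X1 0) * fderiv ℝ (fun p => fderiv ℝ X3 p ((1:ℝ),(0:ℝ),(0:ℝ))) 0 ((1:ℝ),(0:ℝ),(0:ℝ)) = _
      rw [← hA]; ring
    rw [this]; exact hpoly
  · exact mul_ne_zero (neg_ne_zero.mpr hX1) ha
end
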